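/- Let X be a random variable with distribution μ_X on a measure space (X,𝒳,μ), where μ is σ-finite, μ_X ≪ μ, and the generalized entropy h_μ(X) := −∫ log(dμ_X/dμ) dμ_X is finite. Let (Y,𝒴) be a measurable space, ρ : X × Y → [0,∞] a measurable distortion function, and k > 0, m > 0, c > 0. Suppose μ(B_{ρ^{1/k}}(y,δ)) ≤ c δ^m for all y ∈ Y and all δ > 0. Then for every D > 0, h_μ(X) − inf_{s ≥ 0} ( s·D + log ν(s) ) ≥ h_μ(X) + (m/k) · log( m/(k·D) ) − log( c · Γ(m/k + 1) ) − m/k, where ν(s) := sup_{y∈Y} ∫ e^{−s ρ(x,y)} dμ(x). -/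

import Mathlib

/-!
Write `e^{-v} = ∫_{u > v} e^{-u} du` and swap integrals (Tonelli): for a measurable
`g ≥ 0`, `∫ e^{-g} dμ = ∫_0^∞ e^{-u} μ{g < u} du`. With `g = s ρ(·, y)` the subregularity
hypothesis bounds `μ{g < u}` by `c (u/s)^{m/k}`, so `ν(s) ≤ c Γ(m/k + 1) s^{-m/k}`. Evaluating
`s D + log ν(s)` at its minimiser `s = m/(kD)` of this bound gives the claim.
-/

open MeasureTheory Real Set
open scoped ENNReal NNReal

/-- `expNeg u = e^{-u}` for `u ∈ [0,∞]`, with `e^{-∞} = 0`. -/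
noncomputable def expNeg (u : ℝ≥0∞) : ℝ≥0∞ :=
  if u = ⊤ then 0 else ENNReal.ofReal (Real.exp (-u.toReal))

lemma expNeg_eq_setLIntegral (v : ℝ≥0∞) :
    expNeg v = ∫⁻ u in Ioi 0,
      {u : ℝ | v < ENNReal.ofReal u}.indicator (fun u => ENNReal.ofReal (exp (-u))) u := by
  rcases eq_or_ne v ⊤ with rfl | hv
  · simp [expNeg]
  have hset : {u : ℝ | v < ENNReal.ofReal u} = Ioi v.toReal := by
    ext u; simp [ENNReal.lt_ofReal_iff_toReal_lt hv]
  have hint : IntegrableOn (fun u : ℝ => exp (-u)) (Ioi v.toReal) := by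
    simpa using exp_neg_integrableOn_Ioi v.toReal one_pos
  rw [hset, lintegral_indicator measurableSet_Ioi, Measure.restrict_restrict measurableSet_Ioi,
    Ioi_inter_Ioi, max_eq_left ENNReal.toReal_nonneg,
    ← ofReal_integral_eq_lintegral_ofReal hint (.of_forall fun u => (exp_pos _).le),
    integral_exp_neg_Ioi]
  simp [expNeg, hv]

lemma lintegral_exp_neg_mul_rpow {p : ℝ} (hp : -1 < p) :
    ∫⁻ u in Ioi 0, ENNReal.ofReal (exp (-u) * u ^ p) = ENNReal.ofReal (Gamma (p + 1)) := by
  have hint : IntegrableOn (fun u : ℝ => exp (-u) * u ^ p) (Ioi 0) := by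
    simpa using GammaIntegral_convergent (show 0 < p + 1 by linarith)
  have hnn : 0 ≤ᵐ[volume.restrict (Ioi 0)] fun u : ℝ => exp (-u) * u ^ p :=
    (ae_restrict_mem measurableSet_Ioi).mono fun u hu =>
      mul_nonneg (exp_pos _).le (rpow_nonneg (le_of_lt hu) _)
  rw [← ofReal_integral_eq_lintegral_ofReal hint hnn, Gamma_eq_integral (by linarith),
    add_sub_cancel_right]

section

variable {X : Type*} [MeasurableSpace X] (μ : Measure X)

lemma lintegral_expNeg_eq [SFinite μ] {g : X → ℝ≥0∞} (hg : Measurable g) :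
    ∫⁻ x, expNeg (g x) ∂μ =
      ∫⁻ u in Ioi 0, ENNReal.ofReal (exp (-u)) * μ {x | g x < ENNReal.ofReal u} := by
  have hF : Measurable (Function.uncurry fun x u =>
      {u : ℝ | g x < ENNReal.ofReal u}.indicator (fun u => ENNReal.ofReal (exp (-u))) u) :=
    Measurable.indicator (by fun_prop)
      (measurableSet_lt (hg.comp measurable_fst) (by fun_prop) :
        MeasurableSet {p : X × ℝ | g p.1 < ENNReal.ofReal p.2})
  simp_rw [expNeg_eq_setLIntegral]
  rw [lintegral_lintegral_swap hF.aemeasurable]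
  congr 1 with u
  rw [← lintegral_indicator_const (measurableSet_lt hg measurable_const)]
  rfl

lemma lintegral_expNeg_le_of_measure_lt_le [SFinite μ] {g : X → ℝ≥0∞} (hg : Measurable g)
    {C p : ℝ} (hC : 0 ≤ C) (hp : -1 < p)
    (hμ : ∀ u : ℝ, 0 < u → μ {x | g x < ENNReal.ofReal u} ≤ ENNReal.ofReal (C * u ^ p)) :
    ∫⁻ x, expNeg (g x) ∂μ ≤ ENNReal.ofReal (C * Gamma (p + 1)) := by
  calc ∫⁻ x, expNeg (g x) ∂μ
      = ∫⁻ u in Ioi 0, ENNReal.ofReal (exp (-u)) * μ {x | g x < ENNReal.ofReal u} :=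
        lintegral_expNeg_eq μ hg
    _ ≤ ∫⁻ u in Ioi 0, ENNReal.ofReal C * ENNReal.ofReal (exp (-u) * u ^ p) := by
        refine setLIntegral_mono' measurableSet_Ioi fun u hu => ?_
        rw [← ENNReal.ofReal_mul hC, mul_left_comm, ENNReal.ofReal_mul (exp_pos _).le]
        exact mul_le_mul_right (hμ u hu) _
    _ = ENNReal.ofReal (C * Gamma (p + 1)) := by
        rw [lintegral_const_mul _ (by fun_prop), lintegral_exp_neg_mul_rpow hp,
          ← ENNReal.ofReal_mul hC]

lemma measure_ofReal_mul_lt_le_of_subregular {f : X → ℝ≥0∞} {k m c : ℝ} (hk : 0 < k)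
    (hsub : ∀ δ : ℝ, 0 < δ →
      μ {x | f x < ENNReal.ofReal (δ ^ k)} ≤ ENNReal.ofReal (c * δ ^ m))
    {s : ℝ} (hs : 0 < s) {u : ℝ} (hu : 0 < u) :
    μ {x | ENNReal.ofReal s * f x < ENNReal.ofReal u} ≤
      ENNReal.ofReal (c * s ^ (-(m / k)) * u ^ (m / k)) := by
  have hus : 0 < u / s := div_pos hu hs
  set δ : ℝ := (u / s) ^ k⁻¹
  have hδk : δ ^ k = u / s := by
    rw [← rpow_mul hus.le, inv_mul_cancel₀ hk.ne', rpow_one]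
  have hδm : δ ^ m = s ^ (-(m / k)) * u ^ (m / k) := by
    rw [← rpow_mul hus.le, div_rpow hu.le hs.le, rpow_neg hs.le, inv_mul_eq_div,
      div_eq_inv_mul _ k]
    ring_nf
  have hset : {x | ENNReal.ofReal s * f x < ENNReal.ofReal u} =
      {x | f x < ENNReal.ofReal (δ ^ k)} := by
    ext x
    rw [mem_ofPred_eq, mem_ofPred_eq, hδk, ENNReal.ofReal_div_of_pos hs, mul_comm,
      ENNReal.lt_div_iff_mul_lt (.inl (by simp [hs])) (.inl ENNReal.ofReal_ne_top)]
  rw [hset, mul_assoc, ← hδm]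
  exact hsub δ (rpow_pos_of_pos hus _)

end

lemma iInf_add_log_le {ν : ℝ → ℝ≥0∞} {D s R : ℝ} (hs : 0 ≤ s) (hR : 0 < R)
    (hνs : ν s ≤ ENNReal.ofReal R) :
    ⨅ t : {t : ℝ // 0 ≤ t}, (((t : ℝ) * D : ℝ) : EReal) + ENNReal.log (ν t) ≤
      ((s * D + Real.log R : ℝ) : EReal) := by
  refine (iInf_le _ ⟨s, hs⟩).trans ?_
  rw [EReal.coe_add, ← ENNReal.log_ofReal_of_pos hR]
  exact add_le_add le_rfl (ENNReal.log_monotone hνs)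

theorem stmt6_general
    {X Y : Type*} [MeasurableSpace X] [MeasurableSpace Y]
    (μ : Measure X) [SigmaFinite μ]
    (h : ℝ)
    (ρ : X → Y → ℝ≥0∞) (hρ : Measurable (fun p : X × Y => ρ p.1 p.2))
    (k m c : ℝ) (hk : 0 < k) (hm : 0 < m) (hc : 0 < c)
    (hsub : ∀ y : Y, ∀ δ : ℝ, 0 < δ →
      μ {x | ρ x y < ENNReal.ofReal (δ ^ k)} ≤ ENNReal.ofReal (c * δ ^ m))
    (ν : ℝ → ℝ≥0∞)
    (hν : ∀ s : ℝ, ν s = ⨆ y : Y, ∫⁻ x, expNeg (ENNReal.ofReal s * ρ x y) ∂μ) :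
    ∀ D : ℝ, 0 < D →
      (h : EReal) - ⨅ s : {s : ℝ // 0 ≤ s}, (((s : ℝ) * D : ℝ) : EReal) + ENNReal.log (ν s) ≥
        ((h + (m / k) * Real.log (m / (k * D))
            - Real.log (c * Real.Gamma (m / k + 1)) - m / k : ℝ) : EReal) := by
  intro D hD
  set s₀ := m / (k * D)
  have hs₀ : 0 < s₀ := by positivity
  have hC : 0 ≤ c * s₀ ^ (-(m / k)) := by positivity
  have hν₀ : ν s₀ ≤ ENNReal.ofReal (c * s₀ ^ (-(m / k)) * Gamma (m / k + 1)) := by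
    rw [hν]
    refine iSup_le fun y => lintegral_expNeg_le_of_measure_lt_le μ
      (measurable_const.mul (hρ.comp (measurable_id.prodMk measurable_const))) hC
      (by linarith [div_pos hm hk])
      fun _ => measure_ofReal_mul_lt_le_of_subregular μ hk (hsub y) hs₀
  have hΓ : 0 < c * Gamma (m / k + 1) := mul_pos hc (Gamma_pos_of_pos (by positivity))
  have hs₀D : s₀ * D = m / k := by simp only [s₀]; field_simp
  have hlog : Real.log (c * s₀ ^ (-(m / k)) * Gamma (m / k + 1)) =
      Real.log (c * Gamma (m / k + 1)) - m / k * Real.log s₀ := by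
    rw [mul_right_comm, Real.log_mul hΓ.ne' (by positivity), Real.log_rpow hs₀]
    ring
  refine (EReal.sub_le_sub le_rfl (iInf_add_log_le hs₀.le (by positivity) hν₀)).trans' ?_
  rw [← EReal.coe_sub, EReal.coe_le_coe_iff, hlog, hs₀D]
  linarith

/-- For a random variable `X` with distribution `μX ≪ μ`, finite generalized
entropy `h = hμ(X)`, and a `ρ^{1/k}`-subregular reference measure `μ` of dimension `m` with
constants `c > 0` and `δ₀ = ∞`, the Shannon lower bound
`h − inf_{s ≥ 0}(sD + log ν(s))` is bounded below by
`h + (m/k) log(m/(kD)) − log(c Γ(m/k+1)) − m/k` for every `D > 0`. -/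
theorem stmt6
    {X Y : Type*} [MeasurableSpace X] [MeasurableSpace Y]
    (μ : Measure X) [SigmaFinite μ]
    (μX : Measure X) [IsProbabilityMeasure μX] (hac : μX ≪ μ)
    (h : ℝ)
    (hint : Integrable (fun x => Real.log (μX.rnDeriv μ x).toReal) μX)
    (hh : h = -∫ x, Real.log (μX.rnDeriv μ x).toReal ∂μX)
    (ρ : X → Y → ℝ≥0∞) (hρ : Measurable (fun p : X × Y => ρ p.1 p.2))
    (k m c : ℝ) (hk : 0 < k) (hm : 0 < m) (hc : 0 < c)
    (hsub : ∀ y : Y, ∀ δ : ℝ, 0 < δ →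
      μ {x | ρ x y < ENNReal.ofReal (δ ^ k)} ≤ ENNReal.ofReal (c * δ ^ m))
    (ν : ℝ → ℝ≥0∞)
    (hν : ∀ s : ℝ, ν s = ⨆ y : Y, ∫⁻ x, expNeg (ENNReal.ofReal s * ρ x y) ∂μ) :
    ∀ D : ℝ, 0 < D →
      (h : EReal) - ⨅ s : {s : ℝ // 0 ≤ s}, (((s : ℝ) * D : ℝ) : EReal) + ENNReal.log (ν s) ≥
        ((h + (m / k) * Real.log (m / (k * D))
            - Real.log (c * Real.Gamma (m / k + 1)) - m / k : ℝ) : EReal) :=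
  stmt6_general μ h ρ hρ k m c hk hm hc hsub ν hν
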